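/- Under the penalized QIF setup, assume: (i) θ₀ lies in the interior of Θ and is the unique point of Θ satisfying E[g₁(θ₀)] = 0; (ii) the mean function h(θ) = E[g₁(θ)] is continuous on Θ; (iii) sup_{θ∈Θ} ‖ḡ_N(θ) − h(θ)‖ → 0 almost surely as N → ∞; (iv) C̄_N(θ̂_N) → C₀ almost surely, where C₀ is a constant invertible r×r matrix; (v) λ_N → 0 as N → ∞. Then the penalized QIF minimizer θ̂_N exists and θ̂_N converges to θ₀ almost surely (and hence in probability). -/

import Mathlib

/-!
At `θ₀` the sample mean tends to zero, and a.s. the inverse weight matrix `C̄_N(θ₀)⁻¹` is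
eventually bounded: either `X = g(θ₀)` lies a.s. in a hyperplane, so that every `C̄_N(θ₀)` is
singular and its inverse is `0` by Mathlib's convention, or some truncated second moment
`E[X Xᵀ 1{‖X‖ ≤ M}]` is positive definite and the strong law transfers this to `C̄_N(θ₀)`; the
truncation is needed because `X Xᵀ` is not assumed integrable. Hence the penalized objective at
`θ₀` tends to zero. Along `θ̂_N`, the matrices `C̄_N(θ̂_N)` are positive semidefinite and converge
to the invertible `C₀`, which is therefore positive definite, so `C̄_N(θ̂_N)⁻¹` is eventually
uniformly positive definite and minimality of `θ̂_N` forces `ḡ_N(θ̂_N) → 0`. The uniform law (iii)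
gives `h(θ̂_N) → 0`, and compactness of `Θ` together with the unique zero `θ₀` of the continuous
`h` yields `θ̂_N → θ₀`.
-/

open MeasureTheory ProbabilityTheory Filter Matrix Topology

/-- Sample mean `ḡ_N(θ)(ω) = N⁻¹ ∑_{i<N} g_i(θ)(ω)`. -/
noncomputable def gbar {k r : ℕ} {Ω : Type*} (g : ℕ → (Fin k → ℝ) → Ω → Fin r → ℝ)
    (N : ℕ) (θ : Fin k → ℝ) (ω : Ω) : Fin r → ℝ :=
  (N : ℝ)⁻¹ • ∑ i ∈ Finset.range N, g i θ ω

/-- Sample second-moment matrix `C̄_N(θ)(ω) = N⁻¹ ∑_{i<N} g_i(θ)(ω) g_i(θ)(ω)ᵀ`. -/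
noncomputable def Cbar {k r : ℕ} {Ω : Type*} (g : ℕ → (Fin k → ℝ) → Ω → Fin r → ℝ)
    (N : ℕ) (θ : Fin k → ℝ) (ω : Ω) : Matrix (Fin r) (Fin r) ℝ :=
  (N : ℝ)⁻¹ • ∑ i ∈ Finset.range N, Matrix.vecMulVec (g i θ ω) (g i θ ω)

/-- Quadratic inference function `Q_N(θ) = N ḡ_Nᵀ C̄_N⁻¹ ḡ_N`. -/
noncomputable def QN {k r : ℕ} {Ω : Type*} (g : ℕ → (Fin k → ℝ) → Ω → Fin r → ℝ)
    (N : ℕ) (θ : Fin k → ℝ) (ω : Ω) : ℝ :=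
  (N : ℝ) * (gbar g N θ ω ⬝ᵥ (Cbar g N θ ω)⁻¹.mulVec (gbar g N θ ω))

/-- Penalized QIF objective `N⁻¹ Q_N(θ) + λ_N θᵀ D θ`. -/
noncomputable def penObj {k r : ℕ} {Ω : Type*} (g : ℕ → (Fin k → ℝ) → Ω → Fin r → ℝ)
    (D : Matrix (Fin k) (Fin k) ℝ) (lam : ℕ → ℝ)
    (N : ℕ) (θ : Fin k → ℝ) (ω : Ω) : ℝ :=
  (N : ℝ)⁻¹ * QN g N θ ω + lam N * (θ ⬝ᵥ D.mulVec θ)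

open Finset

section QuadraticForm

variable {n : Type*} [Fintype n]

lemma dotProduct_self_nonneg (v : n → ℝ) : 0 ≤ v ⬝ᵥ v :=
  sum_nonneg fun a _ => mul_self_nonneg (v a)

lemma sq_le_dotProduct_self (v : n → ℝ) (a : n) : v a ^ 2 ≤ v ⬝ᵥ v := by
  rw [sq]
  exact single_le_sum (f := fun b => v b * v b) (fun b _ => mul_self_nonneg (v b)) (mem_univ a)

lemma tendsto_zero_of_tendsto_dotProduct_self {ι : Type*} {l : Filter ι} {v : ι → n → ℝ}
    (hv : Tendsto (fun i => v i ⬝ᵥ v i) l (𝓝 0)) : Tendsto v l (𝓝 0) := by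
  have hsqrt : Tendsto (fun i => √(v i ⬝ᵥ v i)) l (𝓝 0) := by
    simpa using hv.sqrt
  refine tendsto_pi_nhds.2 fun a => squeeze_zero_norm (fun i => ?_) hsqrt
  exact Real.abs_le_sqrt (sq_le_dotProduct_self (v i) a)

lemma abs_dotProduct_mulVec_sub_le {A B : Matrix n n ℝ} {ε : ℝ}
    (hAB : ∀ a b, |A a b - B a b| ≤ ε) (v : n → ℝ) :
    |v ⬝ᵥ A *ᵥ v - v ⬝ᵥ B *ᵥ v| ≤ ε * Fintype.card n * (v ⬝ᵥ v) := by
  rw [← dotProduct_sub, ← sub_mulVec]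
  calc |v ⬝ᵥ (A - B) *ᵥ v| = |∑ a, ∑ b, v a * ((A a b - B a b) * v b)| := by
        simp only [dotProduct, mulVec, mul_sum, Matrix.sub_apply]
    _ ≤ ∑ a, ∑ b, ε * (v a ^ 2 + v b ^ 2) / 2 := by
        refine (abs_sum_le_sum_abs _ _).trans (sum_le_sum fun a _ => ?_)
        refine (abs_sum_le_sum_abs _ _).trans (sum_le_sum fun b _ => ?_)
        have hε : |A a b - B a b| ≤ ε := hAB a b
        have hab : 2 * (|v a| * |v b|) ≤ v a ^ 2 + v b ^ 2 := by
          nlinarith [sq_nonneg (|v a| - |v b|), sq_abs (v a), sq_abs (v b)]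
        rw [abs_mul, abs_mul]
        nlinarith [abs_nonneg (v a), abs_nonneg (v b), abs_nonneg (A a b - B a b),
          mul_nonneg (abs_nonneg (v a)) (abs_nonneg (v b))]
    _ = ε * Fintype.card n * (v ⬝ᵥ v) := by
        simp only [dotProduct, ← sq, mul_add, add_div, sum_add_distrib, ← sum_div, ← mul_sum,
          sum_const, card_univ, nsmul_eq_mul]
        ring

lemma eventually_coercive_of_tendsto {ι : Type*} {l : Filter ι} {B : ι → Matrix n n ℝ}
    {A : Matrix n n ℝ} {c : ℝ} (hc : 0 < c) (hB : Tendsto B l (𝓝 A))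
    (hA : ∀ v, c * (v ⬝ᵥ v) ≤ v ⬝ᵥ A *ᵥ v) :
    ∀ᶠ i in l, ∀ v, c / 2 * (v ⬝ᵥ v) ≤ v ⬝ᵥ B i *ᵥ v := by
  set ε := c / (2 * (Fintype.card n + 1))
  have hε : 0 < ε := by positivity
  have hclose : ∀ᶠ i in l, ∀ a b, |B i a b - A a b| ≤ ε := by
    simp only [eventually_all]
    intro a b
    have hab := tendsto_pi_nhds.1 (tendsto_pi_nhds.1 hB a) b
    filter_upwards [Metric.tendsto_nhds.1 hab ε hε] with i hi
    exact (Real.dist_eq _ _ ▸ hi).le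
  filter_upwards [hclose] with i hi v
  have hpert := abs_le.1 (abs_dotProduct_mulVec_sub_le hi v)
  have hεcard : ε * Fintype.card n ≤ c / 2 := by
    rw [div_mul_eq_mul_div, div_le_div_iff₀ (by positivity) two_pos]
    nlinarith
  nlinarith [hA v, mul_le_mul_of_nonneg_right hεcard (dotProduct_self_nonneg v)]

lemma coercive_of_forall_dotProduct_self_eq_one {A : Matrix n n ℝ} {c : ℝ}
    (hA : ∀ v, v ⬝ᵥ v = 1 → c ≤ v ⬝ᵥ A *ᵥ v) (v : n → ℝ) :
    c * (v ⬝ᵥ v) ≤ v ⬝ᵥ A *ᵥ v := by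
  rcases eq_or_ne v 0 with rfl | hv
  · simp
  have hvv : 0 < v ⬝ᵥ v :=
    (dotProduct_self_nonneg v).lt_of_ne' (mt dotProduct_self_eq_zero.1 hv)
  set t := √(v ⬝ᵥ v)
  have ht : 0 < t := Real.sqrt_pos.2 hvv
  have ht2 : t ^ 2 = v ⬝ᵥ v := Real.sq_sqrt hvv.le
  have hsphere := hA (t⁻¹ • v) (by
    rw [smul_dotProduct, dotProduct_smul, smul_eq_mul, smul_eq_mul, ← ht2]
    field_simp)
  rw [mulVec_smul, smul_dotProduct, dotProduct_smul, smul_eq_mul, smul_eq_mul,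
    ← mul_assoc, ← sq, inv_pow, ht2] at hsphere
  rw [← div_eq_inv_mul, le_div_iff₀ hvv] at hsphere
  linarith

lemma isCompact_setOf_dotProduct_self_eq_one : IsCompact {v : n → ℝ | v ⬝ᵥ v = 1} := by
  refine Metric.isCompact_of_isClosed_isBounded
    (isClosed_eq (continuous_id.dotProduct continuous_id) continuous_const) ?_
  refine (Metric.isBounded_closedBall (x := (0 : n → ℝ)) (r := 1)).subset fun v hv => ?_
  rw [mem_closedBall_zero_iff, pi_norm_le_iff_of_nonneg zero_le_one]
  intro a
  rw [Real.norm_eq_abs, ← sq_le_one_iff_abs_le_one]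
  exact (sq_le_dotProduct_self v a).trans_eq hv

lemma exists_coercive_of_monotone {A : ℕ → Matrix n n ℝ}
    (hmono : ∀ v, Monotone fun M => v ⬝ᵥ A M *ᵥ v)
    (hpos : ∀ v, v ≠ 0 → ∃ M, 0 < v ⬝ᵥ A M *ᵥ v) :
    ∃ M, ∃ c > 0, ∀ v, c * (v ⬝ᵥ v) ≤ v ⬝ᵥ A M *ᵥ v := by
  have hcont : ∀ M, Continuous fun v : n → ℝ => v ⬝ᵥ A M *ᵥ v := fun M =>
    continuous_id.dotProduct (continuous_const.matrix_mulVec continuous_id)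
  obtain ⟨M, hM⟩ := isCompact_setOf_dotProduct_self_eq_one.elim_directed_cover
    (fun M => {v : n → ℝ | 0 < v ⬝ᵥ A M *ᵥ v})
    (fun M => isOpen_lt continuous_const (hcont M))
    (fun v hv => by
      obtain ⟨M, hM⟩ := hpos v fun h0 => by simp [h0] at hv
      exact Set.mem_iUnion.2 ⟨M, hM⟩)
    (Monotone.directed_le fun M M' h v (hv : 0 < _) => hv.trans_le (hmono v h))
  obtain ⟨c, hc, hcS⟩ := isCompact_setOf_dotProduct_self_eq_one.exists_forall_le'
    (hcont M).continuousOn hM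
  exact ⟨M, c, hc, coercive_of_forall_dotProduct_self_eq_one hcS⟩

lemma Matrix.PosDef.exists_coercive {A : Matrix n n ℝ} (hA : A.PosDef) :
    ∃ c > 0, ∀ v, c * (v ⬝ᵥ v) ≤ v ⬝ᵥ A *ᵥ v := by
  obtain ⟨-, c, hc, hcA⟩ := exists_coercive_of_monotone (A := fun _ => A)
    (fun v => monotone_const) (fun v hv => ⟨0, by simpa using hA.dotProduct_mulVec_pos hv⟩)
  exact ⟨c, hc, hcA⟩

variable [DecidableEq n]

lemma dotProduct_inv_mulVec_le {A : Matrix n n ℝ} {c : ℝ} (hc : 0 < c)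
    (hA : ∀ v, c * (v ⬝ᵥ v) ≤ v ⬝ᵥ A *ᵥ v) (u : n → ℝ) :
    u ⬝ᵥ A⁻¹ *ᵥ u ≤ c⁻¹ * (u ⬝ᵥ u) := by
  have hunit : IsUnit A := by
    refine mulVec_injective_iff_isUnit.1 fun x y hxy => sub_eq_zero.1 ?_
    have h := hA (x - y)
    rw [mulVec_sub, hxy, sub_self, dotProduct_zero] at h
    exact dotProduct_self_eq_zero.1
      (le_antisymm (nonpos_of_mul_nonpos_right h hc) (dotProduct_self_nonneg _))
  set w := A⁻¹ *ᵥ u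
  have hAw : A *ᵥ w = u := by
    rw [mulVec_mulVec, mul_nonsing_inv _ ((isUnit_iff_isUnit_det A).1 hunit), one_mulVec]
  have hw : c * (w ⬝ᵥ w) ≤ w ⬝ᵥ u := hAw ▸ hA w
  -- `0 ≤ (c • w - u) ⬝ᵥ (c • w - u)` and `hw` give `c * (w ⬝ᵥ u) ≤ u ⬝ᵥ u`
  have hsq := dotProduct_self_nonneg (c • w - u)
  simp only [sub_dotProduct, dotProduct_sub, smul_dotProduct, dotProduct_smul, smul_eq_mul,
    dotProduct_comm u w] at hsq
  rw [dotProduct_comm, le_inv_mul_iff₀ hc]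
  nlinarith

end QuadraticForm

section Truncation

variable {n : Type*} [Fintype n]

lemma dotProduct_vecMulVec_self_mulVec (x v : n → ℝ) :
    v ⬝ᵥ vecMulVec x x *ᵥ v = (x ⬝ᵥ v) ^ 2 := by
  rw [vecMulVec_mulVec, op_smul_eq_smul, dotProduct_smul, smul_eq_mul, dotProduct_comm, sq]

noncomputable def truncOuter (M : ℕ) (x : n → ℝ) : Matrix n n ℝ :=
  if ‖x‖ ≤ M then vecMulVec x x else 0

lemma dotProduct_truncOuter_mulVec (M : ℕ) (x v : n → ℝ) :
    v ⬝ᵥ truncOuter M x *ᵥ v = if ‖x‖ ≤ M then (x ⬝ᵥ v) ^ 2 else 0 := by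
  unfold truncOuter
  split_ifs
  · exact dotProduct_vecMulVec_self_mulVec x v
  · simp

lemma dotProduct_truncOuter_mulVec_le (M : ℕ) (x v : n → ℝ) :
    v ⬝ᵥ truncOuter M x *ᵥ v ≤ v ⬝ᵥ vecMulVec x x *ᵥ v := by
  rw [dotProduct_truncOuter_mulVec, dotProduct_vecMulVec_self_mulVec]
  split_ifs
  exacts [le_rfl, sq_nonneg _]

lemma monotone_dotProduct_truncOuter_mulVec (x v : n → ℝ) :
    Monotone fun M => v ⬝ᵥ truncOuter M x *ᵥ v := by
  intro M M' hM
  simp only [dotProduct_truncOuter_mulVec]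
  split_ifs with h h'
  · rfl
  · exact absurd (h.trans (Nat.cast_le.2 hM)) h'
  · exact sq_nonneg _
  · rfl

lemma truncOuter_apply (M : ℕ) (x : n → ℝ) (a b : n) :
    truncOuter M x a b = if ‖x‖ ≤ M then x a * x b else 0 := by
  unfold truncOuter
  split_ifs <;> rfl

lemma abs_truncOuter_apply_le (M : ℕ) (x : n → ℝ) (a b : n) : |truncOuter M x a b| ≤ M ^ 2 := by
  rw [truncOuter_apply]
  split_ifs with hx
  · rw [abs_mul, sq]
    have hxa := (norm_le_pi_norm x a).trans hx
    exact mul_le_mul hxa ((norm_le_pi_norm x b).trans hx) (abs_nonneg _) (by positivity)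
  · simp

lemma measurable_truncOuter_apply (M : ℕ) (a b : n) :
    Measurable fun x : n → ℝ => truncOuter M x a b := by
  simp only [truncOuter_apply]
  exact Measurable.ite (measurableSet_le measurable_norm measurable_const)
    ((measurable_pi_apply a).mul (measurable_pi_apply b)) measurable_const

variable {Ω : Type*} [MeasurableSpace Ω] {P : Measure Ω} {ξ : Ω → n → ℝ}

noncomputable def truncSecondMoment (P : Measure Ω) (ξ : Ω → n → ℝ) (M : ℕ) : Matrix n n ℝ :=
  Matrix.of fun a b => ∫ ω, truncOuter M (ξ ω) a b ∂P

lemma integrable_truncOuter_apply [IsFiniteMeasure P] (hξ : Measurable ξ) (M : ℕ) (a b : n) :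
    Integrable (fun ω => truncOuter M (ξ ω) a b) P :=
  (integrable_const (μ := P) ((M : ℝ) ^ 2)).mono'
    ((measurable_truncOuter_apply M a b).comp hξ).aestronglyMeasurable
    (Eventually.of_forall fun ω => abs_truncOuter_apply_le M (ξ ω) a b)

lemma dotProduct_truncSecondMoment_mulVec [IsFiniteMeasure P] (hξ : Measurable ξ) (M : ℕ)
    (v : n → ℝ) :
    v ⬝ᵥ truncSecondMoment P ξ M *ᵥ v = ∫ ω, v ⬝ᵥ truncOuter M (ξ ω) *ᵥ v ∂P := by
  have hint := integrable_truncOuter_apply (P := P) hξ M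
  simp only [dotProduct, mulVec, truncSecondMoment, of_apply, mul_sum]
  rw [integral_finsetSum _ fun a _ =>
    integrable_finsetSum _ fun b _ => ((hint a b).mul_const _).const_mul _]
  refine sum_congr rfl fun a _ => ?_
  rw [integral_finsetSum _ fun b _ => ((hint a b).mul_const _).const_mul _]
  refine sum_congr rfl fun b _ => ?_
  rw [integral_const_mul, integral_mul_const]

lemma exists_truncSecondMoment_coercive [IsFiniteMeasure P] (hξ : Measurable ξ)
    (hξv : ∀ v, v ≠ 0 → ¬ ∀ᵐ ω ∂P, ξ ω ⬝ᵥ v = 0) :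
    ∃ M, ∃ c > 0, ∀ v, c * (v ⬝ᵥ v) ≤ v ⬝ᵥ truncSecondMoment P ξ M *ᵥ v := by
  have hint : ∀ M v, Integrable (fun ω => v ⬝ᵥ truncOuter M (ξ ω) *ᵥ v) P := fun M v => by
    simpa only [dotProduct, mulVec] using integrable_finsetSum _ fun a _ =>
      (integrable_finsetSum _ fun b _ =>
        (integrable_truncOuter_apply (P := P) hξ M a b).mul_const (v b)).const_mul (v a)
  have hnonneg : ∀ M v ω, 0 ≤ v ⬝ᵥ truncOuter M (ξ ω) *ᵥ v := fun M v ω => by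
    rw [dotProduct_truncOuter_mulVec]
    split_ifs <;> positivity
  refine exists_coercive_of_monotone (fun v M M' hM => ?_) (fun v hv => ?_)
  · simp only [dotProduct_truncSecondMoment_mulVec (P := P) hξ]
    exact integral_mono (hint M v) (hint M' v)
      fun ω => monotone_dotProduct_truncOuter_mulVec (ξ ω) v hM
  · by_contra! hzero
    refine hξv v hv ?_
    have hae : ∀ᵐ ω ∂P, ∀ M, v ⬝ᵥ truncOuter M (ξ ω) *ᵥ v = 0 := by
      refine ae_all_iff.2 fun M => ?_
      refine (integral_eq_zero_iff_of_nonneg (hnonneg M v) (hint M v)).1 ?_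
      exact le_antisymm (dotProduct_truncSecondMoment_mulVec (P := P) hξ M v ▸ hzero M)
        (integral_nonneg (hnonneg M v))
    filter_upwards [hae] with ω hω
    have h := hω ⌈‖ξ ω‖⌉₊
    rwa [dotProduct_truncOuter_mulVec, if_pos (Nat.le_ceil _), sq_eq_zero_iff] at h

end Truncation

section SecondMoment

variable {n : Type*} [Fintype n]

lemma inv_smul_sum_vecMulVec_eq_zero [DecidableEq n] {x : ℕ → n → ℝ} {v : n → ℝ} (hv : v ≠ 0)
    (hx : ∀ i, x i ⬝ᵥ v = 0) (c : ℝ) (N : ℕ) :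
    (c • ∑ i ∈ range N, vecMulVec (x i) (x i))⁻¹ = 0 := by
  refine nonsing_inv_apply_not_isUnit _ fun hdet => hv ?_
  refine mulVec_injective_iff_isUnit.2 ((isUnit_iff_isUnit_det _).2 hdet) ?_
  simp [smul_mulVec, sum_mulVec, vecMulVec_mulVec, hx]

variable {Ω : Type*} [MeasurableSpace Ω] {P : Measure Ω} {X : ℕ → Ω → n → ℝ}

lemma ae_inv_secondMoment_eq_zero [DecidableEq n] (hident : ∀ i, IdentDistrib (X i) (X 0) P P)
    {v : n → ℝ} (hv : v ≠ 0) (h0 : ∀ᵐ ω ∂P, X 0 ω ⬝ᵥ v = 0) :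
    ∀ᵐ ω ∂P, ∀ N : ℕ, ((N : ℝ)⁻¹ • ∑ i ∈ range N, vecMulVec (X i ω) (X i ω))⁻¹ = 0 := by
  have hmeas : Measurable fun x : n → ℝ => x ⬝ᵥ v :=
    (continuous_id.dotProduct continuous_const).measurable
  have hall : ∀ᵐ ω ∂P, ∀ i, X i ω ⬝ᵥ v = 0 := ae_all_iff.2 fun i =>
    ((hident i).comp hmeas).symm.ae_snd (p := (· = 0))
      (measurableSet_eq_fun measurable_id measurable_const) h0
  filter_upwards [hall] with ω hω N
  exact inv_smul_sum_vecMulVec_eq_zero hv hω _ N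

lemma exists_ae_eventually_coercive_secondMoment [IsProbabilityMeasure P]
    (hX : ∀ i, Measurable (X i)) (hindep : Pairwise fun i j => IndepFun (X i) (X j) P)
    (hident : ∀ i, IdentDistrib (X i) (X 0) P P)
    (hXv : ∀ v, v ≠ 0 → ¬ ∀ᵐ ω ∂P, X 0 ω ⬝ᵥ v = 0) :
    ∃ c > 0, ∀ᵐ ω ∂P, ∀ᶠ N : ℕ in atTop, ∀ v,
      c * (v ⬝ᵥ v) ≤ v ⬝ᵥ ((N : ℝ)⁻¹ • ∑ i ∈ range N, vecMulVec (X i ω) (X i ω)) *ᵥ v := by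
  obtain ⟨M, c, hc, hcoer⟩ := exists_truncSecondMoment_coercive (hX 0) hXv
  have hT := measurable_truncOuter_apply (n := n) M
  have hslln : ∀ᵐ ω ∂P, ∀ a b,
      Tendsto (fun N : ℕ => (∑ i ∈ range N, truncOuter M (X i ω) a b) / N) atTop
        (𝓝 (truncSecondMoment P (X 0) M a b)) := by
    simp only [ae_all_iff]
    intro a b
    exact strong_law_ae_real (fun i ω => truncOuter M (X i ω) a b)
      (integrable_truncOuter_apply (hX 0) M a b)
      (fun i j hij => (hindep hij).comp (hT a b) (hT a b)) (fun i => (hident i).comp (hT a b))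
  refine ⟨c / 2, by positivity, ?_⟩
  filter_upwards [hslln] with ω hω
  have hlim : Tendsto (fun N : ℕ => (N : ℝ)⁻¹ • ∑ i ∈ range N, truncOuter M (X i ω)) atTop
      (𝓝 (truncSecondMoment P (X 0) M)) :=
    tendsto_pi_nhds.2 fun a => tendsto_pi_nhds.2 fun b => by
      simpa [div_eq_inv_mul, Matrix.sum_apply] using hω a b
  filter_upwards [eventually_coercive_of_tendsto hc hlim hcoer] with N hN v
  refine (hN v).trans ?_
  simp only [smul_mulVec, sum_mulVec, dotProduct_smul, dotProduct_sum, smul_eq_mul]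
  gcongr with i
  exact dotProduct_truncOuter_mulVec_le M _ v

theorem ae_exists_eventually_dotProduct_inv_mulVec_le [DecidableEq n] [IsProbabilityMeasure P]
    (hX : ∀ i, Measurable (X i)) (hindep : Pairwise fun i j => IndepFun (X i) (X j) P)
    (hident : ∀ i, IdentDistrib (X i) (X 0) P P) :
    ∀ᵐ ω ∂P, ∃ K, ∀ᶠ N : ℕ in atTop, ∀ u,
      u ⬝ᵥ ((N : ℝ)⁻¹ • ∑ i ∈ range N, vecMulVec (X i ω) (X i ω))⁻¹ *ᵥ u ≤ K * (u ⬝ᵥ u) := by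
  by_cases hdeg : ∃ v, v ≠ 0 ∧ ∀ᵐ ω ∂P, X 0 ω ⬝ᵥ v = 0
  · obtain ⟨v, hv, h0⟩ := hdeg
    filter_upwards [ae_inv_secondMoment_eq_zero hident hv h0] with ω hω
    exact ⟨0, Eventually.of_forall fun N u => by simp [hω N]⟩
  simp only [not_exists, not_and] at hdeg
  obtain ⟨c, hc, hcoer⟩ := exists_ae_eventually_coercive_secondMoment hX hindep hident hdeg
  filter_upwards [hcoer] with ω hω
  exact ⟨c⁻¹, hω.mono fun N => dotProduct_inv_mulVec_le hc⟩

end SecondMoment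

section Limits

variable {n ι : Type*} [Fintype n] {l : Filter ι} {A : ι → Matrix n n ℝ} {A₀ : Matrix n n ℝ}

lemma Matrix.PosSemidef.of_tendsto [l.NeBot] (hA : ∀ i, (A i).PosSemidef)
    (hlim : Tendsto A l (𝓝 A₀)) : A₀.PosSemidef := by
  refine .of_dotProduct_mulVec_nonneg ?_ fun v => ?_
  · have hH : Tendsto (fun i => (A i)ᴴ) l (𝓝 A₀ᴴ) :=
      (continuous_id.matrix_conjTranspose.tendsto A₀).comp hlim
    exact tendsto_nhds_unique (hH.congr fun i => (hA i).isHermitian.eq) hlim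
  · exact ge_of_tendsto (((continuous_const.dotProduct
      (continuous_id.matrix_mulVec continuous_const)).tendsto A₀).comp hlim)
      (Eventually.of_forall fun i => (hA i).dotProduct_mulVec_nonneg v)

lemma exists_eventually_coercive_inv [DecidableEq n] [l.NeBot] (hA : ∀ i, (A i).PosSemidef)
    (hlim : Tendsto A l (𝓝 A₀)) (hA₀ : IsUnit A₀.det) :
    ∃ c > 0, ∀ᶠ i in l, ∀ u, c * (u ⬝ᵥ u) ≤ u ⬝ᵥ (A i)⁻¹ *ᵥ u := by
  have hpd : A₀.PosDef :=
    (PosSemidef.of_tendsto hA hlim).posDef_iff_isUnit.2 ((isUnit_iff_isUnit_det _).2 hA₀)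
  obtain ⟨c, hc, hcoer⟩ := hpd.inv.exists_coercive
  obtain ⟨d, hd⟩ := hA₀
  have hinv : Tendsto (fun i => (A i)⁻¹) l (𝓝 A₀⁻¹) :=
    (continuousAt_matrix_inv A₀ (hd ▸ NormedRing.inverse_continuousAt d)).tendsto.comp hlim
  exact ⟨c / 2, by positivity, eventually_coercive_of_tendsto hc hinv hcoer⟩

end Limits

lemma IsCompact.tendsto_nhds_of_tendsto_comp {X Y ι : Type*} [TopologicalSpace X]
    [TopologicalSpace Y] [T2Space Y] {l : Filter ι} {Θ : Set X} (hΘ : IsCompact Θ) {f : X → Y}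
    (hf : ContinuousOn f Θ) {x₀ : X} {y : Y} (huniq : ∀ x ∈ Θ, f x = y → x = x₀) {u : ι → X}
    (hu : ∀ᶠ i in l, u i ∈ Θ) (hfu : Tendsto (f ∘ u) l (𝓝 y)) : Tendsto u l (𝓝 x₀) := by
  refine hΘ.tendsto_nhds_of_unique_mapClusterPt hu fun x hx hux => huniq x hx ?_
  have hfux : MapClusterPt (f x) l (f ∘ u) :=
    hux.tendsto_comp' ((hf x hx).mono_left (inf_le_inf_left _ (le_principal_iff.2 hu)))
  exact eq_of_nhds_neBot (hfux.clusterPt.mono hfu)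

section QIF

variable {k r : ℕ} {Ω : Type*} {g : ℕ → (Fin k → ℝ) → Ω → Fin r → ℝ}

lemma posSemidef_Cbar (N : ℕ) (θ : Fin k → ℝ) (ω : Ω) : (Cbar g N θ ω).PosSemidef := by
  refine PosSemidef.smul (posSemidef_sum _ fun i _ => ?_) (by positivity)
  simpa using posSemidef_vecMulVec_self_star (g i θ ω)

lemma continuous_gbar (hcont : ∀ i ω, Continuous fun θ => g i θ ω) (N : ℕ) (ω : Ω) :
    Continuous fun θ => gbar g N θ ω := by
  unfold gbar
  exact (continuous_finsetSum _ fun i _ => hcont i ω).const_smul ((N : ℝ)⁻¹)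

lemma tendsto_gbar_sub_of_tendsto_iSup {Θ : Set (Fin k → ℝ)} (hΘ : IsCompact Θ)
    (hcont : ∀ i ω, Continuous fun θ => g i θ ω) {h : (Fin k → ℝ) → Fin r → ℝ}
    (hh : ContinuousOn h Θ) {ω : Ω}
    (hsup : Tendsto (fun N => ⨆ θ : Θ, ‖gbar g N (θ : Fin k → ℝ) ω - h (θ : Fin k → ℝ)‖)
      atTop (𝓝 0))
    {θN : ℕ → Fin k → ℝ} (hθN : ∀ N, θN N ∈ Θ) :
    Tendsto (fun N => gbar g N (θN N) ω - h (θN N)) atTop (𝓝 0) := by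
  refine tendsto_zero_iff_norm_tendsto_zero.2 (squeeze_zero (fun N => norm_nonneg _)
    (fun N => le_ciSup (f := fun θ : Θ => ‖gbar g N θ ω - h θ‖) ?_ ⟨θN N, hθN N⟩) hsup)
  rw [← Set.image_eq_range (fun θ => ‖gbar g N θ ω - h θ‖)]
  exact hΘ.bddAbove_image (((continuous_gbar hcont N ω).continuousOn.sub hh).norm)

lemma penObj_eq (D : Matrix (Fin k) (Fin k) ℝ) (lam : ℕ → ℝ) {N : ℕ} (hN : N ≠ 0)
    (θ : Fin k → ℝ) (ω : Ω) :
    penObj g D lam N θ ω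
      = gbar g N θ ω ⬝ᵥ (Cbar g N θ ω)⁻¹ *ᵥ gbar g N θ ω + lam N * (θ ⬝ᵥ D *ᵥ θ) := by
  rw [penObj, QN, inv_mul_cancel_left₀ (Nat.cast_ne_zero.2 hN)]

lemma tendsto_gbar_of_forall_penObj_le {D : Matrix (Fin k) (Fin k) ℝ} (hD : D.PosSemidef)
    {lam : ℕ → ℝ} (hlamnn : ∀ N, 0 ≤ lam N) (hlam : Tendsto lam atTop (𝓝 0))
    {θN : ℕ → Fin k → ℝ} {θ₀ : Fin k → ℝ} {ω : Ω}
    (hmin : ∀ N, penObj g D lam N (θN N) ω ≤ penObj g D lam N θ₀ ω)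
    (hg₀ : Tendsto (fun N => gbar g N θ₀ ω) atTop (𝓝 0)) {K : ℝ}
    (hK : ∀ᶠ N in atTop, ∀ u, u ⬝ᵥ (Cbar g N θ₀ ω)⁻¹ *ᵥ u ≤ K * (u ⬝ᵥ u)) {c : ℝ} (hc : 0 < c)
    (hcoer : ∀ᶠ N in atTop, ∀ u, c * (u ⬝ᵥ u) ≤ u ⬝ᵥ (Cbar g N (θN N) ω)⁻¹ *ᵥ u) :
    Tendsto (fun N => gbar g N (θN N) ω) atTop (𝓝 0) := by
  refine tendsto_zero_of_tendsto_dotProduct_self ?_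
  have hbound : Tendsto (fun N => c⁻¹ * (K * (gbar g N θ₀ ω ⬝ᵥ gbar g N θ₀ ω)
      + lam N * (θ₀ ⬝ᵥ D *ᵥ θ₀))) atTop (𝓝 0) := by
    have hdot := ((continuous_id.dotProduct continuous_id).tendsto 0).comp hg₀
    simpa using ((hdot.const_mul K).add (hlam.mul_const _)).const_mul c⁻¹
  refine squeeze_zero' (Eventually.of_forall fun N => dotProduct_self_nonneg _) ?_ hbound
  filter_upwards [hK, hcoer, eventually_ne_atTop 0] with N hKN hcN hN
  have hminN := hmin N
  rw [penObj_eq D lam hN, penObj_eq D lam hN] at hminN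
  have hpen : 0 ≤ lam N * (θN N ⬝ᵥ D *ᵥ θN N) :=
    mul_nonneg (hlamnn N) (by simpa using hD.dotProduct_mulVec_nonneg (θN N))
  rw [le_inv_mul_iff₀ hc]
  linarith [hcN (gbar g N (θN N) ω), hKN (gbar g N θ₀ ω)]

end QIF

theorem stmt0_general {k r : ℕ} {Ω : Type*} [MeasurableSpace Ω]
    (P : Measure Ω) [IsProbabilityMeasure P]
    (Θ : Set (Fin k → ℝ)) (hΘ : IsCompact Θ)
    (g : ℕ → (Fin k → ℝ) → Ω → Fin r → ℝ)
    (hmeas : ∀ i, Measurable fun p : (Fin k → ℝ) × Ω => g i p.1 p.2)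
    (hcont : ∀ i ω, Continuous fun θ => g i θ ω)
    (hindep : ∀ θ, iIndepFun (fun i ω => g i θ ω) P)
    (hident : ∀ θ i, IdentDistrib (g i θ) (g 0 θ) P P)
    (D : Matrix (Fin k) (Fin k) ℝ) (hD : D.PosSemidef)
    (lam : ℕ → ℝ) (hlamnn : ∀ N, 0 ≤ lam N)
    (θhat : ℕ → Ω → Fin k → ℝ)
    (hθhatmeas : ∀ N, Measurable (θhat N))
    (hθhatmem : ∀ N ω, θhat N ω ∈ Θ)
    (hθhatmin : ∀ N ω, ∀ θ ∈ Θ, penObj g D lam N (θhat N ω) ω ≤ penObj g D lam N θ ω)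
    (θ₀ : Fin k → ℝ)
    (h : (Fin k → ℝ) → Fin r → ℝ)
    -- (i)
    (hθ₀int : θ₀ ∈ interior Θ)
    (hzero : h θ₀ = 0)
    (huniq : ∀ θ ∈ Θ, h θ = 0 → θ = θ₀)
    -- (ii)
    (hhcont : ContinuousOn h Θ)
    -- (iii)
    (hsup : ∀ᵐ ω ∂P,
      Tendsto (fun N => ⨆ θ : Θ, ‖gbar g N (θ : Fin k → ℝ) ω - h (θ : Fin k → ℝ)‖)
        atTop (𝓝 0))
    -- (iv)
    (C₀ : Matrix (Fin r) (Fin r) ℝ) (hC₀ : IsUnit C₀.det)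
    (hCbar : ∀ᵐ ω ∂P, ∀ a b,
      Tendsto (fun N => Cbar g N (θhat N ω) ω a b) atTop (𝓝 (C₀ a b)))
    -- (v)
    (hlam : Tendsto lam atTop (𝓝 0)) :
    (∀ N ω, ∃ θ ∈ Θ, ∀ θ' ∈ Θ, penObj g D lam N θ ω ≤ penObj g D lam N θ' ω) ∧
    (∀ᵐ ω ∂P, Tendsto (fun N => θhat N ω) atTop (𝓝 θ₀)) ∧
    TendstoInMeasure P θhat atTop (fun _ => θ₀) := by
  have hθ₀ : θ₀ ∈ Θ := interior_subset hθ₀int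
  have hX : ∀ i, Measurable (g i θ₀) := fun i => (hmeas i).comp measurable_prodMk_left
  have hconsistent : ∀ᵐ ω ∂P, Tendsto (fun N => θhat N ω) atTop (𝓝 θ₀) := by
    filter_upwards [hsup, hCbar, ae_exists_eventually_dotProduct_inv_mulVec_le hX
      (fun i j hij => (hindep θ₀).indepFun hij) (hident θ₀)] with ω hsupω hCω ⟨K, hK⟩
    have hdev := fun θN => tendsto_gbar_sub_of_tendsto_iSup (θN := θN) hΘ hcont hhcont hsupω
    have hg₀ : Tendsto (fun N => gbar g N θ₀ ω) atTop (𝓝 0) := by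
      simpa [hzero] using hdev (fun _ => θ₀) fun _ => hθ₀
    obtain ⟨c, hc, hcoer⟩ := exists_eventually_coercive_inv
      (fun N => posSemidef_Cbar N (θhat N ω) ω)
      (tendsto_pi_nhds.2 fun a => tendsto_pi_nhds.2 (hCω a)) hC₀
    have hĝ := tendsto_gbar_of_forall_penObj_le hD hlamnn hlam
      (fun N => hθhatmin N ω θ₀ hθ₀) hg₀ hK hc hcoer
    have hhθ : Tendsto (fun N => h (θhat N ω)) atTop (𝓝 0) := by
      simpa using hĝ.sub (hdev _ fun N => hθhatmem N ω)
    exact hΘ.tendsto_nhds_of_tendsto_comp hhcont huniq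
      (Eventually.of_forall (hθhatmem · ω)) hhθ
  exact ⟨fun N ω => ⟨θhat N ω, hθhatmem N ω, hθhatmin N ω⟩, hconsistent,
    tendstoInMeasure_of_tendsto_ae (fun N => (hθhatmeas N).aestronglyMeasurable) hconsistent⟩

/-- Consistency of the penalized QIF estimator.  Under the penalized QIF setup,
if (i) θ₀ is interior to Θ and is the unique zero of `h(θ) = E[g₁(θ)]` on Θ; (ii) h is
continuous on Θ; (iii) `sup_{θ∈Θ} ‖ḡ_N(θ) − h(θ)‖ → 0` a.s.; (iv) `C̄_N(θ̂_N) → C₀` a.s. with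
C₀ invertible; (v) `λ_N → 0`; then the penalized minimizer exists and `θ̂_N → θ₀` almost
surely (hence in probability). -/
theorem stmt0 {k r : ℕ} {Ω : Type*} [MeasurableSpace Ω]
    (P : Measure Ω) [IsProbabilityMeasure P]
    (Θ : Set (Fin k → ℝ)) (hΘ : IsCompact Θ)
    (g : ℕ → (Fin k → ℝ) → Ω → Fin r → ℝ)
    (hmeas : ∀ i, Measurable fun p : (Fin k → ℝ) × Ω => g i p.1 p.2)
    (hcont : ∀ i ω, Continuous fun θ => g i θ ω)
    (hindep : ∀ θ, iIndepFun (fun i ω => g i θ ω) P)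
    (hident : ∀ θ i, IdentDistrib (g i θ) (g 0 θ) P P)
    (D : Matrix (Fin k) (Fin k) ℝ) (hD : D.PosSemidef)
    (lam : ℕ → ℝ) (hlamnn : ∀ N, 0 ≤ lam N)
    (θhat : ℕ → Ω → Fin k → ℝ)
    (hθhatmeas : ∀ N, Measurable (θhat N))
    (hθhatmem : ∀ N ω, θhat N ω ∈ Θ)
    (hθhatmin : ∀ N ω, ∀ θ ∈ Θ, penObj g D lam N (θhat N ω) ω ≤ penObj g D lam N θ ω)
    (θ₀ : Fin k → ℝ)
    (h : (Fin k → ℝ) → Fin r → ℝ)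
    (hh : ∀ θ, h θ = ∫ ω, g 0 θ ω ∂P)
    -- (i)
    (hθ₀int : θ₀ ∈ interior Θ)
    (hzero : h θ₀ = 0)
    (huniq : ∀ θ ∈ Θ, h θ = 0 → θ = θ₀)
    -- (ii)
    (hhcont : ContinuousOn h Θ)
    -- (iii)
    (hsup : ∀ᵐ ω ∂P,
      Tendsto (fun N => ⨆ θ : Θ, ‖gbar g N (θ : Fin k → ℝ) ω - h (θ : Fin k → ℝ)‖)
        atTop (𝓝 0))
    -- (iv)
    (C₀ : Matrix (Fin r) (Fin r) ℝ) (hC₀ : IsUnit C₀.det)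
    (hCbar : ∀ᵐ ω ∂P, ∀ a b,
      Tendsto (fun N => Cbar g N (θhat N ω) ω a b) atTop (𝓝 (C₀ a b)))
    -- (v)
    (hlam : Tendsto lam atTop (𝓝 0)) :
    (∀ N ω, ∃ θ ∈ Θ, ∀ θ' ∈ Θ, penObj g D lam N θ ω ≤ penObj g D lam N θ' ω) ∧
    (∀ᵐ ω ∂P, Tendsto (fun N => θhat N ω) atTop (𝓝 θ₀)) ∧
    TendstoInMeasure P θhat atTop (fun _ => θ₀) :=
  stmt0_general P Θ hΘ g hmeas hcont hindep hident D hD lam hlamnn θhat hθhatmeas hθhatmem hθhatmin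
    θ₀ h hθ₀int hzero huniq hhcont hsup C₀ hC₀ hCbar hlam
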